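/- Let F_A be a free group on a set A with |A| > 1, let κ = |F_A|, fix a ∈ A, and let S be the set of all non-identity elements g of F_A whose reduced word begins and ends with a letter from {a, a⁻¹}. Then S is κ-large, but S is neither left κ-large nor right κ-large. -/

import Mathlib

/-!
Multiplying `g` by `a` on the left if its reduced word does not begin with `a^±1`, and on the
right if it does not end with `a^±1`, causes no cancellation and lands in `S`; hence
`{1, a⁻¹} * S * {1, a⁻¹}` is everything. Since `S⁻¹ = S`, a left covering `F * S` yields the
right covering `S * F⁻¹`, so only right coverings need to be ruled out. Given `|F| < κ`, pick a
letter `b ≠ a` and `n` such that every `f⁻¹` with `f ∈ F` has fewer than `n` letters `b⁻¹`: for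
finite `F` take `n` beyond all word lengths, for infinite `F` we have `|F| < |A|`, so some `b`
occurs in no word at all. Then `bⁿ f⁻¹` begins with `b`, so `bⁿ ∉ S * F`.
-/

open scoped Pointwise
open Cardinal

universe u

variable {G : Type u}

/-- `A` is left `κ`-large: `G = F * A` for some `F` with `|F| < κ`. -/
def LeftLarge [Group G] (κ : Cardinal.{u}) (A : Set G) : Prop :=
  ∃ F : Set G, #F < κ ∧ F * A = Set.univ

/-- `A` is right `κ`-large: `G = A * F` for some `F` with `|F| < κ`. -/
def RightLarge [Group G] (κ : Cardinal.{u}) (A : Set G) : Prop :=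
  ∃ F : Set G, #F < κ ∧ A * F = Set.univ

/-- `A` is `κ`-large: `G = F * A * F` for some `F` with `|F| < κ`. -/
def KLarge [Group G] (κ : Cardinal.{u}) (A : Set G) : Prop :=
  ∃ F : Set G, #F < κ ∧ F * A * F = Set.univ

/-- `A` is left `κ`-thick: for every `F` with `|F| < κ` there is `a ∈ A` with `F * a ⊆ A`. -/
def LeftThick [Group G] (κ : Cardinal.{u}) (A : Set G) : Prop :=
  ∀ F : Set G, #F < κ → ∃ a ∈ A, F * {a} ⊆ A

/-- `A` is right `κ`-thick: for every `F` with `|F| < κ` there is `a ∈ A` with `a * F ⊆ A`. -/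
def RightThick [Group G] (κ : Cardinal.{u}) (A : Set G) : Prop :=
  ∀ F : Set G, #F < κ → ∃ a ∈ A, {a} * F ⊆ A

/-- `A` is `κ`-thick: for every `F` with `|F| < κ` there is `a ∈ A` with `F * a * F ⊆ A`. -/
def KThick [Group G] (κ : Cardinal.{u}) (A : Set G) : Prop :=
  ∀ F : Set G, #F < κ → ∃ a ∈ A, F * {a} * F ⊆ A

/-- `G` is `κ`-normal: every subset of size `< κ` lies in a normal subgroup of size `< κ`. -/
def KNormal (G : Type u) [Group G] (κ : Cardinal.{u}) : Prop :=
  ∀ F : Set G, #F < κ → ∃ H : Subgroup G, H.Normal ∧ #(H : Set G) < κ ∧ F ⊆ (H : Set G)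

/-- `κ` is a singular cardinal: infinite, with cofinality strictly less than `κ`. -/
def Singular (κ : Cardinal.{u}) : Prop := ℵ₀ ≤ κ ∧ κ.ord.cof < κ

/-- The set of non-identity elements of the free group whose reduced word begins and
ends with a letter from `{a, a⁻¹}`. -/
def beginsEndsWith (A : Type u) [DecidableEq A] (a : A) : Set (FreeGroup A) :=
  {g | g ≠ 1 ∧ (g.toWord.head?.map Prod.fst) = some a ∧
    (g.toWord.getLast?.map Prod.fst) = some a}


section Large

variable [Group G] {κ : Cardinal.{u}} {S : Set G}

theorem LeftLarge.rightLarge_inv (h : LeftLarge κ S) : RightLarge κ S⁻¹ := by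
  obtain ⟨F, hF, hFS⟩ := h
  refine ⟨F⁻¹, by rwa [Cardinal.mk_inv], ?_⟩
  rw [← mul_inv_rev, hFS, Set.inv_univ]

end Large

namespace FreeGroup

variable {α : Type u} [DecidableEq α]

theorem toWord_mk_singleton_mul {x : α × Bool} {g : FreeGroup α}
    (h : ∀ p ∈ g.toWord.head?, x.1 = p.1 → x.2 = p.2) :
    (mk [x] * g).toWord = x :: g.toWord := by
  have hred : IsReduced (x :: g.toWord) := by
    rcases hw : g.toWord with _ | ⟨p, w⟩
    · exact .singleton
    · rw [hw] at h
      exact isReduced_cons_cons.mpr ⟨h p rfl, hw ▸ isReduced_toWord⟩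
  rw [← mk_toWord (x := g), mul_mk, toWord_mk, mk_toWord, List.singleton_append,
    hred.reduce_eq]

theorem toWord_mul_mk_singleton {x : α × Bool} {g : FreeGroup α}
    (h : ∀ p ∈ g.toWord.getLast?, p.1 = x.1 → p.2 = x.2) :
    (g * mk [x]).toWord = g.toWord ++ [x] := by
  have hred : IsReduced (g.toWord ++ [x]) :=
    List.isChain_append.mpr ⟨isReduced_toWord, List.isChain_singleton _, fun p hp q hq => by
      rw [List.head?_cons, Option.mem_some_iff] at hq
      exact hq ▸ h p hp⟩
  rw [← mk_toWord (x := g), mul_mk, toWord_mk, mk_toWord, hred.reduce_eq]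

theorem toWord_of_pow_mul {b : α} {g : FreeGroup α} (h : g.toWord.head? ≠ some (b, false))
    (n : ℕ) : (of b ^ n * g).toWord = List.replicate n (b, true) ++ g.toWord := by
  induction n with
  | zero => simp
  | succ n ih =>
    rw [List.replicate_succ, List.cons_append, ← ih, pow_succ', mul_assoc]
    refine toWord_mk_singleton_mul ?_
    rintro ⟨q, c⟩ hq rfl
    rw [ih] at hq
    cases n with
    | zero => cases c <;> simp_all
    | succ n => simp_all [List.replicate_succ]

theorem head?_toWord_of_pow_mul {b : α} {n : ℕ} {g : FreeGroup α}
    (h : g.toWord.count (b, false) < n) :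
    (of b ^ n * g).toWord.head? = some (b, true) := by
  induction n generalizing g with
  | zero => exact absurd h (Nat.not_lt_zero _)
  | succ n ih =>
    by_cases hhead : g.toWord.head? = some (b, false)
    · obtain ⟨w, hw⟩ := List.head?_eq_some_iff.mp hhead
      have hg : g = (of b)⁻¹ * mk w := by
        rw [← mk_toWord (x := g), hw, of, inv_mk, mul_mk]
        rfl
      have hw' : (mk w).toWord = w := by
        rw [toWord_mk, (isReduced_toWord.infix (hw ▸ List.suffix_cons _ _).isInfix).reduce_eq]
      rw [hg, pow_succ, mul_assoc, mul_inv_cancel_left]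
      apply ih
      rw [hw']
      simpa [hw] using h
    · rw [toWord_of_pow_mul hhead, List.replicate_succ]
      rfl

theorem head?_map_fst_toWord_inv (g : FreeGroup α) :
    g⁻¹.toWord.head?.map Prod.fst = g.toWord.getLast?.map Prod.fst := by
  rw [toWord_inv, invRev, List.head?_reverse, List.getLast?_map, Option.map_map]
  rfl

theorem exists_forall_count_lt_of_finite {F : Set (FreeGroup α)} (hF : F.Finite)
    (x : α × Bool) : ∃ n, ∀ f ∈ F, f.toWord.count x < n := by
  obtain ⟨N, hN⟩ := (hF.image norm).bddAbove
  exact ⟨N + 1, fun f hf => List.count_le_length.trans_lt (Nat.lt_succ_of_le (hN ⟨f, hf, rfl⟩))⟩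

theorem exists_ne_forall_notMem_toWord {F : Set (FreeGroup α)} (hF : ℵ₀ ≤ #F)
    (hFα : #F < #α) (a : α) : ∃ b ≠ a, ∀ f ∈ F, ∀ c, (b, c) ∉ f.toWord := by
  set U := insert a (⋃ f ∈ F, Prod.fst '' {p | p ∈ f.toWord})
  have hU : #U < #α :=
    calc #U ≤ #(⋃ f ∈ F, Prod.fst '' {p | p ∈ f.toWord}) + 1 := mk_insert_le
      _ ≤ #F * ℵ₀ + 1 := by
        gcongr
        refine (mk_biUnion_le _ _).trans (mul_le_mul_right (ciSup_le' fun f => ?_) _)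
        exact (f.1.toWord.finite_toSet.image _).lt_aleph0.le
      _ = #F := by rw [mul_aleph0_eq hF, add_one_eq hF]
      _ < #α := hFα
  obtain ⟨b, hb⟩ := (Set.ne_univ_iff_exists_notMem U).mp fun h => by
    rw [h, mk_univ] at hU
    exact hU.false
  refine ⟨b, fun hba => hb (hba ▸ Set.mem_insert _ _), fun f hf c hbc => hb ?_⟩
  exact Set.mem_insert_of_mem _ (Set.mem_biUnion hf ⟨_, hbc, rfl⟩)

theorem exists_ne_forall_count_lt [Nontrivial α] (a : α) {F : Set (FreeGroup α)}
    (hF : #F < #(FreeGroup α)) : ∃ b ≠ a, ∃ n, ∀ f ∈ F, f.toWord.count (b, false) < n := by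
  rcases F.finite_or_infinite with hfin | hinf
  · obtain ⟨b, hb⟩ := exists_ne a
    exact ⟨b, hb, exists_forall_count_lt_of_finite hfin _⟩
  · have hF' : ℵ₀ ≤ #F := infinite_iff.mp hinf.to_subtype
    rw [mk_freeGroup] at hF
    obtain ⟨b, hb, hbF⟩ :=
      exists_ne_forall_notMem_toWord hF' ((lt_max_iff.mp hF).resolve_right hF'.not_gt) a
    exact ⟨b, hb, 1, fun f hf => by simpa [List.count_eq_zero] using hbF f hf false⟩

end FreeGroup

section beginsEndsWith

open FreeGroup

variable {α : Type u} [DecidableEq α]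

theorem mem_beginsEndsWith_iff {a : α} {g : FreeGroup α} :
    g ∈ beginsEndsWith α a ↔ g.toWord.head?.map Prod.fst = some a ∧
      g.toWord.getLast?.map Prod.fst = some a := by
  refine ⟨fun h => h.2, fun h => ⟨?_, h⟩⟩
  rintro rfl
  simp at h

theorem inv_beginsEndsWith (a : α) : (beginsEndsWith α a)⁻¹ = beginsEndsWith α a := by
  ext g
  rw [Set.mem_inv, mem_beginsEndsWith_iff, mem_beginsEndsWith_iff, head?_map_fst_toWord_inv,
    ← head?_map_fst_toWord_inv g⁻¹, inv_inv, and_comm]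

theorem exists_mul_mul_mem_beginsEndsWith (a : α) (g : FreeGroup α) :
    ∃ x ∈ ({1, of a} : Set (FreeGroup α)), ∃ y ∈ ({1, of a} : Set (FreeGroup α)),
      x * g * y ∈ beginsEndsWith α a := by
  obtain ⟨x, hx, hhead⟩ : ∃ x ∈ ({1, of a} : Set (FreeGroup α)),
      (x * g).toWord.head?.map Prod.fst = some a := by
    by_cases h : g.toWord.head?.map Prod.fst = some a
    · exact ⟨1, .inl rfl, by rwa [one_mul]⟩
    · refine ⟨of a, .inr rfl, ?_⟩
      rw [of, toWord_mk_singleton_mul]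
      · rfl
      rintro p hp rfl
      exact (h (by rw [Option.mem_def.mp hp]; rfl)).elim
  by_cases hlast : (x * g).toWord.getLast?.map Prod.fst = some a
  · exact ⟨x, hx, 1, .inl rfl, mem_beginsEndsWith_iff.mpr ⟨by rwa [mul_one], by rwa [mul_one]⟩⟩
  · refine ⟨x, hx, of a, .inr rfl, mem_beginsEndsWith_iff.mpr ?_⟩
    have hne : (x * g).toWord ≠ [] := fun h => by simp [h] at hhead
    rw [of, toWord_mul_mk_singleton, List.head?_append_of_ne_nil _ hne, List.getLast?_concat]
    · exact ⟨hhead, rfl⟩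
    rintro p hp rfl
    exact (hlast (by rw [Option.mem_def.mp hp]; rfl)).elim

theorem kLarge_beginsEndsWith (a : α) : KLarge #(FreeGroup α) (beginsEndsWith α a) := by
  have : Nonempty α := ⟨a⟩
  refine ⟨{1, of a}⁻¹, ?_, Set.eq_univ_of_forall fun g => ?_⟩
  · rw [Cardinal.mk_inv]
    exact ((Set.toFinite _).lt_aleph0).trans_le (aleph0_le_mk _)
  obtain ⟨x, hx, y, hy, hs⟩ := exists_mul_mul_mem_beginsEndsWith a g
  have hg : g = x⁻¹ * (x * g * y) * y⁻¹ := by group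
  rw [hg]
  exact Set.mul_mem_mul (Set.mul_mem_mul (Set.inv_mem_inv.mpr hx) hs) (Set.inv_mem_inv.mpr hy)

theorem not_rightLarge_beginsEndsWith [Nontrivial α] (a : α) :
    ¬ RightLarge #(FreeGroup α) (beginsEndsWith α a) := by
  rintro ⟨F, hF, hSF⟩
  obtain ⟨b, hba, n, hn⟩ := exists_ne_forall_count_lt a (F := F⁻¹) (by rwa [Cardinal.mk_inv])
  obtain ⟨s, hs, f, hf, hsf⟩ : of b ^ n ∈ beginsEndsWith α a * F := hSF ▸ Set.mem_univ _
  have hhead := (mem_beginsEndsWith_iff.mp hs).1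
  rw [eq_mul_inv_of_mul_eq hsf, head?_toWord_of_pow_mul (hn _ (Set.inv_mem_inv.mpr hf))] at hhead
  exact hba (Option.some_inj.mp hhead)

end beginsEndsWith

/-- For a free group `F_A` with `|A| > 1` and `a ∈ A`, the set `S`
of reduced words beginning and ending with a letter from `{a, a⁻¹}` is `κ`-large but
neither left nor right `κ`-large, where `κ = |F_A|`. -/
theorem beginsEndsWith_kLarge_not_oneSided (A : Type u) [DecidableEq A]
    (hA : 1 < #A) (a : A) :
    KLarge (#(FreeGroup A)) (beginsEndsWith A a) ∧
    ¬ LeftLarge (#(FreeGroup A)) (beginsEndsWith A a) ∧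
    ¬ RightLarge (#(FreeGroup A)) (beginsEndsWith A a) := by
  have : Nontrivial A := one_lt_iff_nontrivial.mp hA
  refine ⟨kLarge_beginsEndsWith a, fun hleft => ?_, not_rightLarge_beginsEndsWith a⟩
  exact not_rightLarge_beginsEndsWith a (inv_beginsEndsWith a ▸ hleft.rightLarge_inv)
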